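/- Let I ⊆ ℝ be an open interval, let h : I → ℝ be continuous, let c ∈ I and λ > 1, and set a = c + arcoth(λ)/(λ − 1). Assume h(s) ≤ −1 for every s ∈ I with s ≥ c, and that sup I > a. Then there is no twice continuously differentiable function f : [c, a] → ℝ satisfying f''(s) = (−1 + (f'(s))²)·(1 − h(s)·f'(s)) for all s ∈ [c, a] with f'(c) = −λ; that is, every such solution blows up before a. -/

import Mathlib

/-! `g = f'` starts at `-λ < -1` and can never climb back to the level `-λ`, because there
`g' = (λ² - 1)(1 + λ h) < 0`. So `g ≤ -λ` throughout, whence `h g ≥ -g ≥ λ`, and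
`s ↦ arcoth (-g s) + (λ - 1) s`, whose derivative is `λ - h g`, is antitone. Since `arcoth` is
positive on `(1, ∞)`, the solution can live on an interval of length less than
`arcoth λ / (λ - 1)` only. -/

open Set Filter

/-- The inverse hyperbolic cotangent, `arcoth x = (1/2)·ln((x+1)/(x−1))` for `x > 1`. -/
noncomputable def arcoth (x : ℝ) : ℝ := (1 / 2) * Real.log ((x + 1) / (x - 1))

theorem arcoth_pos {x : ℝ} (hx : 1 < x) : 0 < arcoth x := by
  have hquot : 1 < (x + 1) / (x - 1) := by rw [one_lt_div (by linarith)]; linarith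
  have := Real.log_pos hquot
  unfold arcoth
  positivity

theorem hasDerivAt_arcoth {x : ℝ} (hx : 1 < x) : HasDerivAt arcoth (1 - x ^ 2)⁻¹ x := by
  have hquot : HasDerivAt (fun y => (y + 1) / (y - 1))
      ((1 * (x - 1) - (x + 1) * 1) / (x - 1) ^ 2) x :=
    ((hasDerivAt_id x).add_const 1).div ((hasDerivAt_id x).sub_const 1) (by linarith)
  have hlog := (hquot.log (div_pos (by linarith) (by linarith)).ne').const_mul (1 / 2 : ℝ)
  refine hlog.congr_deriv ?_
  have : x - 1 ≠ 0 := by linarith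
  have : x + 1 ≠ 0 := by linarith
  have : 1 - x ^ 2 ≠ 0 := by nlinarith
  field_simp
  ring

section BlowUp

variable {g h : ℝ → ℝ} {c b l : ℝ}

theorem le_neg_of_hasDerivWithinAt_ode (hl : 1 < l)
    (hg : ∀ s ∈ Icc c b, HasDerivWithinAt g ((-1 + g s ^ 2) * (1 - h s * g s)) (Icc c b) s)
    (hh : ∀ s ∈ Icc c b, h s ≤ -1) (hgc : g c ≤ -l) : ∀ s ∈ Icc c b, g s ≤ -l :=
  image_le_of_deriv_right_lt_deriv_boundary (fun s hs => (hg s hs).continuousWithinAt)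
    (fun s hs => (hg s (Ico_subset_Icc_self hs)).mono_of_mem_nhdsWithin
      (Icc_mem_nhdsGE_of_mem hs))
    hgc (fun _ => hasDerivAt_const _ (-l)) fun s hs hgs => by
      have := hh s (Ico_subset_Icc_self hs)
      rw [hgs]
      exact mul_neg_of_pos_of_neg (by nlinarith) (by nlinarith)

theorem antitoneOn_arcoth_neg_add_mul (hl : 1 < l)
    (hg : ∀ s ∈ Icc c b, HasDerivWithinAt g ((-1 + g s ^ 2) * (1 - h s * g s)) (Icc c b) s)
    (hh : ∀ s ∈ Icc c b, h s ≤ -1) (hgl : ∀ s ∈ Icc c b, g s ≤ -l) :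
    AntitoneOn (fun s => arcoth (-g s) + (l - 1) * s) (Icc c b) := by
  have hderiv : ∀ s ∈ Icc c b, HasDerivWithinAt (fun s => arcoth (-g s) + (l - 1) * s)
      (l - h s * g s) (Icc c b) s := by
    intro s hs
    have hgs := hgl s hs
    have hsq : 1 - g s ^ 2 ≠ 0 := by nlinarith
    have harcoth := (hasDerivAt_arcoth (x := -g s) (by linarith)).comp_hasDerivWithinAt s
      (hg s hs).neg
    refine (harcoth.add ((hasDerivAt_id s).const_mul (l - 1)).hasDerivWithinAt).congr_deriv ?_
    simp only [neg_sq, mul_one]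
    field_simp
    ring
  refine antitoneOn_of_hasDerivWithinAt_nonpos (convex_Icc c b)
    (fun s hs => (hderiv s hs).continuousWithinAt)
    (fun s hs => (hderiv s (interior_subset hs)).mono interior_subset) fun s hs => ?_
  have hhs := hh s (interior_subset hs)
  have hgs := hgl s (interior_subset hs)
  nlinarith

theorem mul_sub_lt_arcoth_of_hasDerivWithinAt_ode (hl : 1 < l) (hcb : c ≤ b)
    (hg : ∀ s ∈ Icc c b, HasDerivWithinAt g ((-1 + g s ^ 2) * (1 - h s * g s)) (Icc c b) s)
    (hh : ∀ s ∈ Icc c b, h s ≤ -1) (hgc : g c = -l) : (l - 1) * (b - c) < arcoth l := by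
  have hgl := le_neg_of_hasDerivWithinAt_ode hl hg hh hgc.le
  have hanti := antitoneOn_arcoth_neg_add_mul hl hg hh hgl
    (left_mem_Icc.2 hcb) (right_mem_Icc.2 hcb) hcb
  have hpos := arcoth_pos (x := -g b) (by linarith [hgl b (right_mem_Icc.2 hcb)])
  simp only [hgc, neg_neg] at hanti
  linarith

end BlowUp

theorem blow_up_case_eps_one_epstilde_neg_one_negative_slope_general
    (I : Set ℝ) (hIconn : I.OrdConnected)
    (h : ℝ → ℝ)
    (c : ℝ) (hc : c ∈ I) (l : ℝ) (hl : 1 < l)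
    (a : ℝ) (ha : a = c + arcoth l / (l - 1))
    (hneg : ∀ s ∈ I, c ≤ s → h s ≤ -1)
    (hsup : ∃ s ∈ I, a < s) :
    ¬ ∃ f : ℝ → ℝ,
      ContDiffOn ℝ 2 f (Set.Icc c a) ∧
      (∀ s ∈ Set.Icc c a,
        derivWithin (derivWithin f (Set.Icc c a)) (Set.Icc c a) s =
          (-1 + (derivWithin f (Set.Icc c a) s) ^ 2) *
            (1 - h s * derivWithin f (Set.Icc c a) s)) ∧
      derivWithin f (Set.Icc c a) c = -l := by
  rintro ⟨f, hf, hode, hfc⟩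
  have hl0 : 0 < l - 1 := by linarith
  have hca : c < a := by
    rw [ha]
    exact lt_add_of_pos_right c (div_pos (arcoth_pos hl) hl0)
  obtain ⟨t, htI, hat⟩ := hsup
  have hh : ∀ s ∈ Icc c a, h s ≤ -1 := fun s hs =>
    hneg s (hIconn.out hc htI ⟨hs.1, hs.2.trans hat.le⟩) hs.1
  have hf' : DifferentiableOn ℝ (derivWithin f (Icc c a)) (Icc c a) :=
    (hf.derivWithin (uniqueDiffOn_Icc hca) (m := 1) (by norm_num)).differentiableOn one_ne_zero
  have hg : ∀ s ∈ Icc c a, HasDerivWithinAt (derivWithin f (Icc c a))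
      ((-1 + derivWithin f (Icc c a) s ^ 2) * (1 - h s * derivWithin f (Icc c a) s))
      (Icc c a) s := fun s hs => hode s hs ▸ (hf' s hs).hasDerivWithinAt
  have hlt := mul_sub_lt_arcoth_of_hasDerivWithinAt_ode hl hca.le hg hh hfc
  rw [ha, add_sub_cancel_left, mul_div_cancel₀ _ hl0.ne'] at hlt
  exact lt_irrefl _ hlt

/-- Finite time blow up for `f'' = (−1 + (f')²)(1 − h f')` with
`f'(c) = −λ`, `λ > 1` and `h ≤ −1` on `I ∩ [c, ∞)`: no `C²` solution exists on all of
`[c, a]` where `a = c + arcoth(λ)/(λ − 1)`. -/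
theorem blow_up_case_eps_one_epstilde_neg_one_negative_slope
    (I : Set ℝ) (hIopen : IsOpen I) (hIconn : I.OrdConnected)
    (h : ℝ → ℝ) (hcont : ContinuousOn h I)
    (c : ℝ) (hc : c ∈ I) (l : ℝ) (hl : 1 < l)
    (a : ℝ) (ha : a = c + arcoth l / (l - 1))
    (hneg : ∀ s ∈ I, c ≤ s → h s ≤ -1)
    (hsup : ∃ s ∈ I, a < s) :
    ¬ ∃ f : ℝ → ℝ,
      ContDiffOn ℝ 2 f (Set.Icc c a) ∧
      (∀ s ∈ Set.Icc c a,
        derivWithin (derivWithin f (Set.Icc c a)) (Set.Icc c a) s =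
          (-1 + (derivWithin f (Set.Icc c a) s) ^ 2) *
            (1 - h s * derivWithin f (Set.Icc c a) s)) ∧
      derivWithin f (Set.Icc c a) c = -l :=
  blow_up_case_eps_one_epstilde_neg_one_negative_slope_general I hIconn h c hc l hl a ha hneg hsup
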